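/- Suppose kernels H_t satisfy the gradient bound |∇_x H_t(x,y)| ≤ C t^{-(n+1)/2} e^{-|x-y|²/(ct)}, and let f ∈ L^{2,λ}(ℝⁿ), 0 ≤ λ < n. For a ball B of radius r_B and f_k = f·1_{2^{k+1}B \ 2^k B} (k ≥ 1), one has for every x ∈ B and t ∈ (0, r_B²): |∫ ∇_x H_t(x,y) f_k(y) dy| ≤ C (2^k r_B)^{-1-(n-λ)/2} ‖f‖_{L^{2,λ}}, and consequently (r_B^{-λ} ∫_0^{r_B²} ∫_B |∫ ∇_x H_t(x,y) f_k(y) dy|² dx dt)^{1/2} ≤ C 2^{-k(1+(n-λ)/2)} ‖f‖_{L^{2,λ}}. -/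

import Mathlib

open MeasureTheory Metric Set Real Module
open scoped Nat

/-! For `x ∈ B` and `y ∈ 2^{k+1}B \ 2^k B` one has `|x - y| ≥ 2^{k-1} r_B`, and the boundedness of
`u ↦ u^s e^{-u}` on `[0, ∞)` turns the Gaussian bound into `|∇_x H_t(x,y)| ≲ |x - y|^{-(n+1)}`
uniformly in `t`. So the integral over the annulus is `≲ (2^k r_B)^{-(n+1)} ∫_{2^{k+1}B} |f|`, and
Cauchy–Schwarz together with the Morrey bound gives `∫_{2^{k+1}B} |f| ≲ (2^k r_B)^{(n+λ)/2} M`.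
For the second estimate the square of this uniform bound is integrated over `(0, r_B²] × B`, whose
measure `≃ r_B^{n+2}` exactly cancels the remaining power of `r_B`. -/

theorem rpow_mul_exp_neg_le_one_add_factorial {s u : ℝ} {m : ℕ} (hs : 0 ≤ s) (hsm : s ≤ m)
    (hu : 0 ≤ u) : u ^ s * exp (-u) ≤ 1 + m ! := by
  have hpow : u ^ s ≤ 1 + u ^ m := by
    rcases le_total u 1 with hu1 | hu1
    · linarith [rpow_le_one hu hu1 hs, pow_nonneg hu m]
    · rw [← rpow_natCast]
      linarith [rpow_le_rpow_of_exponent_le hu1 hsm]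
  have hfact : u ^ m * exp (-u) ≤ m ! := by
    rw [exp_neg, ← div_eq_mul_inv, div_le_iff₀ (exp_pos u), ← div_le_iff₀' (by positivity)]
    exact pow_div_factorial_le_exp _ hu m
  calc u ^ s * exp (-u) ≤ (1 + u ^ m) * exp (-u) := by gcongr
    _ = exp (-u) + u ^ m * exp (-u) := by ring
    _ ≤ 1 + m ! := add_le_add (exp_le_one_iff.mpr (by linarith)) hfact

theorem rpow_neg_mul_exp_neg_sq_div_le {s c t d : ℝ} {m : ℕ} (hs : 0 ≤ s) (hsm : s ≤ m)
    (hc : 0 < c) (ht : 0 < t) (hd : 0 < d) :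
    t ^ (-s) * exp (-d ^ 2 / (c * t)) ≤ c ^ s * (1 + m !) * d ^ (-(2 * s)) := by
  set u := d ^ 2 / (c * t)
  have ht_eq : t ^ (-s) = c ^ s * d ^ (-(2 * s)) * u ^ s := by
    rw [div_rpow (by positivity) (by positivity), mul_rpow hc.le ht.le, rpow_neg ht.le,
      rpow_neg hd.le, ← rpow_natCast, ← rpow_mul hd.le]
    push_cast
    field_simp
  rw [ht_eq, neg_div]
  calc c ^ s * d ^ (-(2 * s)) * u ^ s * exp (-u)
      = c ^ s * d ^ (-(2 * s)) * (u ^ s * exp (-u)) := by ring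
    _ ≤ c ^ s * d ^ (-(2 * s)) * (1 + m !) := by
      gcongr
      exact rpow_mul_exp_neg_le_one_add_factorial hs hsm (by positivity)
    _ = c ^ s * (1 + m !) * d ^ (-(2 * s)) := by ring

theorem gaussian_le_rpow_neg {C c t ρ d : ℝ} (n : ℕ) (hC : 0 ≤ C) (hc : 0 < c) (ht : 0 < t)
    (hd : 0 < d) (hdρ : d ≤ ρ) :
    C * t ^ (-((n : ℝ) + 1) / 2) * exp (-ρ ^ 2 / (c * t)) ≤
      C * c ^ (((n : ℝ) + 1) / 2) * (1 + (n + 1) !) * d ^ (-((n : ℝ) + 1)) := by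
  have hs : ((n : ℝ) + 1) / 2 ≤ ((n + 1 : ℕ) : ℝ) := by push_cast; linarith
  have key := rpow_neg_mul_exp_neg_sq_div_le (by positivity) hs hc ht (hd.trans_le hdρ)
  rw [mul_div_cancel₀ _ two_ne_zero] at key
  have hρd : ρ ^ (-((n : ℝ) + 1)) ≤ d ^ (-((n : ℝ) + 1)) :=
    rpow_le_rpow_of_nonpos hd hdρ (by linarith)
  calc C * t ^ (-((n : ℝ) + 1) / 2) * exp (-ρ ^ 2 / (c * t))
      = C * (t ^ (-(((n : ℝ) + 1) / 2)) * exp (-ρ ^ 2 / (c * t))) := by rw [neg_div, mul_assoc]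
    _ ≤ C * (c ^ (((n : ℝ) + 1) / 2) * (1 + (n + 1) !) * d ^ (-((n : ℝ) + 1))) :=
      mul_le_mul_of_nonneg_left (key.trans (by gcongr)) hC
    _ = C * c ^ (((n : ℝ) + 1) / 2) * (1 + (n + 1) !) * d ^ (-((n : ℝ) + 1)) := by ring

theorem div_two_rpow_neg_mul_two_mul_rpow {P : ℝ} (hP : 0 < P) (a b : ℝ) :
    (P / 2) ^ (-a) * (2 * P) ^ b = 2 ^ (a + b) * P ^ (b - a) := by
  rw [div_rpow hP.le zero_le_two, mul_rpow zero_le_two hP.le, rpow_neg zero_le_two,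
    rpow_add two_pos, sub_eq_add_neg, rpow_add hP]
  field_simp

theorem pow_mul_rpow_neg {a r : ℝ} (k : ℕ) (ha : 0 ≤ a) (hr : 0 ≤ r) (σ : ℝ) :
    (a ^ k * r) ^ (-σ) = a ^ (-(k : ℝ) * σ) * r ^ (-σ) := by
  rw [mul_rpow (by positivity) hr, ← rpow_natCast, ← rpow_mul ha, neg_mul, mul_neg]

theorem half_le_dist_of_mem_ball_of_notMem_ball {X : Type*} [PseudoMetricSpace X] {z x y : X}
    {r R : ℝ} (hx : x ∈ ball z r) (hy : y ∉ ball z R) (hrR : 2 * r ≤ R) : R / 2 ≤ dist x y := by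
  rw [mem_ball] at hx hy
  linarith [dist_triangle y x z, dist_comm x y]

section

variable {α E : Type*} [MeasurableSpace α] {μ : Measure α} {s : Set α}

theorem norm_setIntegral_smul_le [NormedAddCommGroup E] [NormedSpace ℝ E] {f : α → ℝ}
    {g : α → E} {K : ℝ} (hs : MeasurableSet s) (hf : IntegrableOn f s μ)
    (hg : ∀ y ∈ s, ‖g y‖ ≤ K) :
    ‖∫ y in s, f y • g y ∂μ‖ ≤ K * ∫ y in s, |f y| ∂μ := by
  rw [mul_comm, ← integral_mul_const]
  refine norm_integral_le_of_norm_le (hf.abs.mul_const K) ((ae_restrict_iff' hs).mpr ?_)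
  exact .of_forall fun y hy => by
    rw [norm_smul, norm_eq_abs]
    exact mul_le_mul_of_nonneg_left (hg y hy) (abs_nonneg _)

theorem setIntegral_abs_le_sqrt_mul_sqrt (hs : μ s ≠ ⊤) {f : α → ℝ}
    (hf : AEStronglyMeasurable f (μ.restrict s)) (hsq : IntegrableOn (fun y => f y ^ 2) s μ) :
    ∫ y in s, |f y| ∂μ ≤ √(∫ y in s, f y ^ 2 ∂μ) * √(μ.real s) := by
  have : IsFiniteMeasure (μ.restrict s) := isFiniteMeasure_restrict.mpr hs
  have hf2 : MemLp (fun y => |f y|) 2 (μ.restrict s) := by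
    simpa [norm_eq_abs] using ((memLp_two_iff_integrable_sq hf).mpr hsq).norm
  have holder := integral_mul_le_Lp_mul_Lq_of_nonneg HolderConjugate.two_two
    (.of_forall fun y => abs_nonneg (f y)) (.of_forall fun _ => zero_le_one)
    (by simpa using hf2) (by simpa using memLp_const (1 : ℝ))
  simpa [sqrt_eq_rpow, measureReal_def] using holder

theorem setIntegral_setIntegral_norm_sq_le [NormedAddCommGroup E] {β : Type*}
    [MeasurableSpace β] {ν : Measure β} {T : Set β} (hT : ν T ≠ ⊤) (hs : μ s ≠ ⊤)
    {G : β → α → E} {A : ℝ} (hG : ∀ t ∈ T, ∀ x ∈ s, ‖G t x‖ ≤ A) :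
    ∫ t in T, ∫ x in s, ‖G t x‖ ^ 2 ∂μ ∂ν ≤ ν.real T * (μ.real s * A ^ 2) := by
  have hinner : ∀ t ∈ T, ‖∫ x in s, ‖G t x‖ ^ 2 ∂μ‖ ≤ A ^ 2 * μ.real s := fun t ht =>
    norm_setIntegral_le_of_norm_le_const hs.lt_top fun x hx => by
      rw [norm_pow, norm_norm]
      exact pow_le_pow_left₀ (norm_nonneg _) (hG t ht x hx) 2
  calc ∫ t in T, ∫ x in s, ‖G t x‖ ^ 2 ∂μ ∂ν
      ≤ ‖∫ t in T, ∫ x in s, ‖G t x‖ ^ 2 ∂μ ∂ν‖ := le_abs_self _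
    _ ≤ A ^ 2 * μ.real s * ν.real T := norm_setIntegral_le_of_norm_le_const hT.lt_top hinner
    _ = ν.real T * (μ.real s * A ^ 2) := by ring

end

section

variable {E F : Type*} [NormedAddCommGroup E] [NormedSpace ℝ E] [MeasurableSpace E]
  [BorelSpace E] [FiniteDimensional ℝ E] (μ : Measure E) [μ.IsAddHaarMeasure]

theorem addHaar_real_ball_of_pos (x : E) {r : ℝ} (hr : 0 < r) :
    μ.real (ball x r) = r ^ finrank ℝ E * μ.real (ball 0 1) := by
  rw [measureReal_def, Measure.addHaar_ball_of_pos μ x hr, ENNReal.toReal_mul,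
    ENNReal.toReal_ofReal (by positivity), measureReal_def]

variable {μ}

theorem setIntegral_abs_ball_le_of_morrey {f : E → ℝ} {x : E} {r lam M : ℝ} (hr : 0 < r)
    (hM : 0 ≤ M) (hf : AEStronglyMeasurable f μ)
    (hsq : IntegrableOn (fun y => f y ^ 2) (ball x r) μ)
    (hmor : r ^ (-lam) * ∫ y in ball x r, f y ^ 2 ∂μ ≤ M ^ 2) :
    ∫ y in ball x r, |f y| ∂μ ≤
      √(μ.real (ball 0 1)) * M * r ^ ((lam + finrank ℝ E) / 2) := by
  have hsq_le : ∫ y in ball x r, f y ^ 2 ∂μ ≤ M ^ 2 * r ^ lam := by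
    have := mul_le_mul_of_nonneg_left hmor (rpow_nonneg hr.le lam)
    rwa [← mul_assoc, ← rpow_add hr, add_neg_cancel, rpow_zero, one_mul, mul_comm] at this
  have sqrt_rpow : ∀ a : ℝ, √(r ^ a) = r ^ (a / 2) := fun a => by
    rw [sqrt_eq_rpow, ← rpow_mul hr.le, mul_one_div]
  calc ∫ y in ball x r, |f y| ∂μ
      ≤ √(∫ y in ball x r, f y ^ 2 ∂μ) * √(μ.real (ball x r)) :=
        setIntegral_abs_le_sqrt_mul_sqrt measure_ball_lt_top.ne hf.restrict hsq
    _ ≤ √(M ^ 2 * r ^ lam) * √(r ^ (finrank ℝ E : ℝ) * μ.real (ball 0 1)) := by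
        rw [addHaar_real_ball_of_pos μ x hr, rpow_natCast]
        gcongr
    _ = √(μ.real (ball 0 1)) * M * r ^ ((lam + finrank ℝ E) / 2) := by
        rw [sqrt_mul (sq_nonneg M), sqrt_mul (rpow_nonneg hr.le _), sqrt_sq hM, sqrt_rpow,
          sqrt_rpow, add_div, rpow_add hr]
        ring

theorem norm_setIntegral_annulus_smul_le {n : ℕ} (hn : finrank ℝ E = n) [NormedAddCommGroup F]
    [NormedSpace ℝ F] {lam C c t M r P : ℝ} (hC : 0 ≤ C) (hc : 0 < c) (ht : 0 < t) (hM : 0 ≤ M)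
    (hP : 0 < P) (hrP : 2 * r ≤ P) {z x : E} (hx : x ∈ ball z r) {g : E → F}
    (hg : ∀ y, ‖g y‖ ≤ C * t ^ (-((n : ℝ) + 1) / 2) * exp (-(dist x y) ^ 2 / (c * t)))
    {f : E → ℝ} (hf : AEStronglyMeasurable f μ)
    (hsq : IntegrableOn (fun y => f y ^ 2) (ball z (2 * P)) μ)
    (hmor : (2 * P) ^ (-lam) * ∫ y in ball z (2 * P), f y ^ 2 ∂μ ≤ M ^ 2) :
    ‖∫ y in ball z (2 * P) \ ball z P, f y • g y ∂μ‖ ≤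
      C * c ^ (((n : ℝ) + 1) / 2) * (1 + (n + 1) !) * √(μ.real (ball 0 1)) *
        2 ^ ((n : ℝ) + 1 + (lam + n) / 2) * P ^ (-1 - ((n : ℝ) - lam) / 2) * M := by
  set K := C * c ^ (((n : ℝ) + 1) / 2) * (1 + (n + 1) !)
  have hK : ∀ y ∈ ball z (2 * P) \ ball z P, ‖g y‖ ≤ K * (P / 2) ^ (-((n : ℝ) + 1)) :=
    fun y hy => (hg y).trans <| gaussian_le_rpow_neg n hC hc ht (by positivity)
      (half_le_dist_of_mem_ball_of_notMem_ball hx hy.2 hrP)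
  have : IsFiniteMeasure (μ.restrict (ball z (2 * P))) :=
    isFiniteMeasure_restrict.mpr measure_ball_lt_top.ne
  have hf_int : IntegrableOn f (ball z (2 * P)) μ :=
    ((memLp_two_iff_integrable_sq hf.restrict).mpr hsq).integrable one_le_two
  have hexp : (lam + n) / 2 - ((n : ℝ) + 1) = -1 - ((n : ℝ) - lam) / 2 := by ring
  calc ‖∫ y in ball z (2 * P) \ ball z P, f y • g y ∂μ‖
      ≤ K * (P / 2) ^ (-((n : ℝ) + 1)) * ∫ y in ball z (2 * P) \ ball z P, |f y| ∂μ :=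
        norm_setIntegral_smul_le (measurableSet_ball.diff measurableSet_ball)
          (hf_int.mono_set sdiff_subset) hK
    _ ≤ K * (P / 2) ^ (-((n : ℝ) + 1)) * ∫ y in ball z (2 * P), |f y| ∂μ := by
        refine mul_le_mul_of_nonneg_left ?_ (by positivity)
        exact setIntegral_mono_set hf_int.abs (.of_forall fun y => abs_nonneg _)
          sdiff_subset.eventuallyLE
    _ ≤ K * (P / 2) ^ (-((n : ℝ) + 1)) *
          (√(μ.real (ball 0 1)) * M * (2 * P) ^ ((lam + n) / 2)) := by
        gcongr
        simpa only [hn] using setIntegral_abs_ball_le_of_morrey (by positivity) hM hf hsq hmor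
    _ = K * √(μ.real (ball 0 1)) * 2 ^ ((n : ℝ) + 1 + (lam + n) / 2) *
          P ^ (-1 - ((n : ℝ) - lam) / 2) * M := by
        rw [← hexp]
        linear_combination (K * √(μ.real (ball 0 1)) * M) *
          div_two_rpow_neg_mul_two_mul_rpow hP ((n : ℝ) + 1) ((lam + n) / 2)

theorem rpow_neg_mul_setIntegral_setIntegral_norm_sq_le {n : ℕ} (hn : finrank ℝ E = n)
    [NormedAddCommGroup F] {G : ℝ → E → F} {z : E} {r lam B : ℝ} (hr : 0 < r) (hB : 0 ≤ B)
    (hG : ∀ t ∈ Ioc 0 (r ^ 2), ∀ x ∈ ball z r, ‖G t x‖ ≤ B * r ^ (-(1 + ((n : ℝ) - lam) / 2))) :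
    (r ^ (-lam) * ∫ t in Ioc 0 (r ^ 2), ∫ x in ball z r, ‖G t x‖ ^ 2 ∂μ) ^ ((1 : ℝ) / 2) ≤
      √(μ.real (ball 0 1)) * B := by
  set κ := μ.real (ball (0 : E) 1)
  have hdouble := setIntegral_setIntegral_norm_sq_le (ν := volume) (by simp)
    (measure_ball_lt_top (μ := μ)).ne hG
  rw [addHaar_real_ball_of_pos μ z hr, hn, Real.volume_real_Ioc_of_le (by positivity),
    sub_zero] at hdouble
  have hpow : r ^ (-lam) * r ^ 2 * r ^ n * (r ^ (-(1 + ((n : ℝ) - lam) / 2))) ^ 2 = 1 := by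
    rw [← rpow_natCast r 2, ← rpow_natCast r n, ← rpow_natCast (r ^ _) 2, ← rpow_mul hr.le,
      ← rpow_add hr, ← rpow_add hr, ← rpow_add hr]
    convert rpow_zero r using 2
    push_cast
    ring
  have hscale : r ^ (-lam) * (r ^ 2 * (r ^ n * κ * (B * r ^ (-(1 + ((n : ℝ) - lam) / 2))) ^ 2)) =
      (√κ * B) ^ 2 := by
    rw [mul_pow (√κ), sq_sqrt measureReal_nonneg]
    linear_combination κ * B ^ 2 * hpow
  calc (r ^ (-lam) * ∫ t in Ioc 0 (r ^ 2), ∫ x in ball z r, ‖G t x‖ ^ 2 ∂μ) ^ ((1 : ℝ) / 2)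
      ≤ (r ^ (-lam) * (r ^ 2 * (r ^ n * κ * (B * r ^ (-(1 + ((n : ℝ) - lam) / 2))) ^ 2)))
          ^ ((1 : ℝ) / 2) := by gcongr
    _ = √κ * B := by rw [hscale, ← sqrt_eq_rpow, sqrt_sq (by positivity)]

end

theorem gradient_kernel_annulus_estimate_general (n : ℕ) (lam C c : ℝ)
    (hC : 0 ≤ C) (hc : 0 < c) :
    ∃ C' > 0, ∀ (gradH : ℝ → EuclideanSpace ℝ (Fin n) → EuclideanSpace ℝ (Fin n) →
        EuclideanSpace ℝ (Fin n))
      (f : EuclideanSpace ℝ (Fin n) → ℝ) (M : ℝ), 0 ≤ M →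
      (∀ t x, AEStronglyMeasurable (fun y => gradH t x y) volume) →
      (∀ (t : ℝ) (x y : EuclideanSpace ℝ (Fin n)), 0 < t →
        ‖gradH t x y‖ ≤ C * t ^ (-((n : ℝ) + 1) / 2) * Real.exp (-(dist x y) ^ 2 / (c * t))) →
      AEStronglyMeasurable f volume →
      (∀ (x : EuclideanSpace ℝ (Fin n)) (r : ℝ), 0 < r →
        IntegrableOn (fun y => f y ^ 2) (ball x r) volume) →
      (∀ (x : EuclideanSpace ℝ (Fin n)) (r : ℝ), 0 < r →
        r ^ (-lam) * ∫ y in ball x r, f y ^ 2 ≤ M ^ 2) →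
      ∀ (xB : EuclideanSpace ℝ (Fin n)) (rB : ℝ), 0 < rB → ∀ k : ℕ, 1 ≤ k →
        (∀ x ∈ ball xB rB, ∀ t ∈ Ioc (0 : ℝ) (rB ^ 2),
          ‖∫ y in ball xB (2 ^ (k + 1) * rB) \ ball xB (2 ^ k * rB), f y • gradH t x y‖ ≤
            C' * ((2 : ℝ) ^ k * rB) ^ (-1 - ((n : ℝ) - lam) / 2) * M) ∧
        (rB ^ (-lam) * ∫ t in Ioc (0 : ℝ) (rB ^ 2), ∫ x in ball xB rB,
            ‖∫ y in ball xB (2 ^ (k + 1) * rB) \ ball xB (2 ^ k * rB),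
              f y • gradH t x y‖ ^ 2) ^ ((1 : ℝ) / 2) ≤
          C' * (2 : ℝ) ^ (-(k : ℝ) * (1 + ((n : ℝ) - lam) / 2)) * M := by
  set κ := volume.real (ball (0 : EuclideanSpace ℝ (Fin n)) 1)
  set D := C * c ^ (((n : ℝ) + 1) / 2) * (1 + (n + 1) !) * √κ *
    2 ^ ((n : ℝ) + 1 + (lam + n) / 2) + 1
  refine ⟨D * max 1 √κ, by positivity, ?_⟩
  intro gradH f M hM _ hker hf hsq hMor xB rB hrB k hk
  have hrP : 2 * rB ≤ 2 ^ k * rB := by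
    gcongr
    exact le_self_pow₀ one_le_two (by omega)
  have hpoint : ∀ x ∈ ball xB rB, ∀ t ∈ Ioc (0 : ℝ) (rB ^ 2),
      ‖∫ y in ball xB (2 ^ (k + 1) * rB) \ ball xB (2 ^ k * rB), f y • gradH t x y‖ ≤
        D * ((2 : ℝ) ^ k * rB) ^ (-1 - ((n : ℝ) - lam) / 2) * M := by
    intro x hx t ht
    rw [show (2 : ℝ) ^ (k + 1) * rB = 2 * (2 ^ k * rB) by ring]
    refine (norm_setIntegral_annulus_smul_le finrank_euclideanSpace_fin hC hc ht.1 hM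
      (by positivity) hrP hx (hker t x · ht.1) hf (hsq _ _ (by positivity))
      (hMor _ _ (by positivity))).trans ?_
    gcongr
    linarith
  refine ⟨fun x hx t ht => (hpoint x hx t ht).trans ?_, ?_⟩
  · gcongr ?_ * _ * _
    exact le_mul_of_one_le_right (by positivity) (le_max_left 1 √κ)
  set σ := 1 + ((n : ℝ) - lam) / 2
  have hscaled : ∀ t ∈ Ioc (0 : ℝ) (rB ^ 2), ∀ x ∈ ball xB rB,
      ‖∫ y in ball xB (2 ^ (k + 1) * rB) \ ball xB (2 ^ k * rB), f y • gradH t x y‖ ≤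
        D * 2 ^ (-(k : ℝ) * σ) * M * rB ^ (-σ) := by
    intro t ht x hx
    refine (hpoint x hx t ht).trans_eq ?_
    rw [show -1 - ((n : ℝ) - lam) / 2 = -σ by ring, pow_mul_rpow_neg k zero_le_two hrB.le]
    ring
  calc _ ≤ √κ * (D * 2 ^ (-(k : ℝ) * σ) * M) :=
        rpow_neg_mul_setIntegral_setIntegral_norm_sq_le finrank_euclideanSpace_fin hrB
          (by positivity) hscaled
    _ = D * √κ * 2 ^ (-(k : ℝ) * σ) * M := by ring
    _ ≤ D * max 1 √κ * 2 ^ (-(k : ℝ) * σ) * M := by gcongr; exact le_max_right _ _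

/-- Estimate of `J_k` in the proof of part (1) of the main theorem: if the gradient
kernels satisfy `‖∇_x H_t(x,y)‖ ≤ C t^{-(n+1)/2} e^{-|x-y|²/(ct)}` and `f ∈ L^{2,λ}(ℝⁿ)`
with Morrey bound `M`, then for `f_k = f·1_{2^{k+1}B \ 2^k B}`, every `x ∈ B` and
`t ∈ (0, r_B²]`: `‖∫ ∇_x H_t(x,y) f_k(y) dy‖ ≤ C' (2^k r_B)^{-1-(n-λ)/2} M`, and
consequently `(r_B^{-λ} ∫_0^{r_B²} ∫_B ‖∫ ∇_x H_t(x,y) f_k(y) dy‖² dx dt)^{1/2} ≤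
C' 2^{-k(1+(n-λ)/2)} M`. -/
theorem gradient_kernel_annulus_estimate (n : ℕ) (lam C c : ℝ)
    (hlam0 : 0 ≤ lam) (hlamn : lam < n) (hC : 0 ≤ C) (hc : 0 < c) :
    ∃ C' > 0, ∀ (gradH : ℝ → EuclideanSpace ℝ (Fin n) → EuclideanSpace ℝ (Fin n) →
        EuclideanSpace ℝ (Fin n))
      (f : EuclideanSpace ℝ (Fin n) → ℝ) (M : ℝ), 0 ≤ M →
      (∀ t x, AEStronglyMeasurable (fun y => gradH t x y) volume) →
      (∀ (t : ℝ) (x y : EuclideanSpace ℝ (Fin n)), 0 < t →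
        ‖gradH t x y‖ ≤ C * t ^ (-((n : ℝ) + 1) / 2) * Real.exp (-(dist x y) ^ 2 / (c * t))) →
      AEStronglyMeasurable f volume →
      (∀ (x : EuclideanSpace ℝ (Fin n)) (r : ℝ), 0 < r →
        IntegrableOn (fun y => f y ^ 2) (ball x r) volume) →
      (∀ (x : EuclideanSpace ℝ (Fin n)) (r : ℝ), 0 < r →
        r ^ (-lam) * ∫ y in ball x r, f y ^ 2 ≤ M ^ 2) →
      ∀ (xB : EuclideanSpace ℝ (Fin n)) (rB : ℝ), 0 < rB → ∀ k : ℕ, 1 ≤ k →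
        (∀ x ∈ ball xB rB, ∀ t ∈ Ioc (0 : ℝ) (rB ^ 2),
          ‖∫ y in ball xB (2 ^ (k + 1) * rB) \ ball xB (2 ^ k * rB), f y • gradH t x y‖ ≤
            C' * ((2 : ℝ) ^ k * rB) ^ (-1 - ((n : ℝ) - lam) / 2) * M) ∧
        (rB ^ (-lam) * ∫ t in Ioc (0 : ℝ) (rB ^ 2), ∫ x in ball xB rB,
            ‖∫ y in ball xB (2 ^ (k + 1) * rB) \ ball xB (2 ^ k * rB),
              f y • gradH t x y‖ ^ 2) ^ ((1 : ℝ) / 2) ≤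
          C' * (2 : ℝ) ^ (-(k : ℝ) * (1 + ((n : ℝ) - lam) / 2)) * M :=
  gradient_kernel_annulus_estimate_general n lam C c hC hc
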